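/- (Theorem 2) For each τ ≥ 0 let E_τ(ρ) = Σᵢ Kᵢ(τ) ρ Kᵢ(τ)† be a trace-preserving qubit channel (Σᵢ Kᵢ(τ)†Kᵢ(τ) = 𝟙) whose Mueller data are t(τ) ∈ ℝ³ and the diagonal matrix Λ(τ) = diag(λ₁(τ), λ₂(τ), λ₃(τ)). Assume the dynamics is Markovian in the sense that for every pair of qubit density matrices ρ, ρ′ the map τ ↦ (sum of the absolute values of the eigenvalues of E_τ(ρ) − E_τ(ρ′)) is nonincreasing. Then for every unit vector m̂ ∈ ℝ³ the sharpness of the POVM obtained by applying the conjugate channel to the projectors Π± = (1/2)(𝟙 ± m̂·σ), namely τ ↦ √(m̂₁²λ₁(τ)² + m̂₂²λ₂(τ)² + m̂₃²λ₃(τ)²), is a nonincreasing function of τ. -/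

import Mathlib

open Matrix

/-- Pauli matrix σ₁. -/
noncomputable def σ1 : Matrix (Fin 2) (Fin 2) ℂ := !![0, 1; 1, 0]
/-- Pauli matrix σ₂. -/
noncomputable def σ2 : Matrix (Fin 2) (Fin 2) ℂ := !![0, -Complex.I; Complex.I, 0]
/-- Pauli matrix σ₃. -/
noncomputable def σ3 : Matrix (Fin 2) (Fin 2) ℂ := !![1, 0; 0, -1]

/-- The three Pauli matrices, indexed. -/
noncomputable def pauli : Fin 3 → Matrix (Fin 2) (Fin 2) ℂ
  | 0 => σ1
  | 1 => σ2
  | 2 => σ3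

/-- `v · σ = v₁σ₁ + v₂σ₂ + v₃σ₃` for `v ∈ ℝ³`. -/
noncomputable def dotσ (v : Fin 3 → ℝ) : Matrix (Fin 2) (Fin 2) ℂ :=
  ∑ i, (v i : ℂ) • pauli i

/-- Euclidean norm of `v ∈ ℝ³`. -/
noncomputable def enorm3 (v : Fin 3 → ℝ) : ℝ := Real.sqrt (v 0 ^ 2 + v 1 ^ 2 + v 2 ^ 2)


/-! The projectors `Π± = (1/2)(𝟙 ± m̂·σ)` are themselves qubit states, and their images under
`E_τ` differ by `E_τ(m̂·σ)`. This is traceless and Hermitian with Pauli coordinates `Λ(τ) m̂`,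
i.e. equal to `(Λ(τ) m̂)·σ`, whose eigenvalues are `±‖Λ(τ) m̂‖`. So the Markov hypothesis for
the pair `Π±` says exactly that `2‖Λ(τ) m̂‖` is nonincreasing. -/

section KrausMap

variable {n ι R : Type*} [Fintype n] [Fintype ι] [CommRing R] [StarRing R]

def krausMap (K : ι → Matrix n n R) : Matrix n n R →ₗ[R] Matrix n n R where
  toFun ρ := ∑ i, K i * ρ * (K i)ᴴ
  map_add' ρ σ := by simp only [mul_add, add_mul, Finset.sum_add_distrib]
  map_smul' c ρ := by simp only [mul_smul_comm, smul_mul_assoc, Finset.smul_sum, RingHom.id_apply]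

theorem krausMap_apply (K : ι → Matrix n n R) (ρ : Matrix n n R) :
    krausMap K ρ = ∑ i, K i * ρ * (K i)ᴴ := rfl

theorem isHermitian_krausMap {A : Matrix n n R} (hA : A.IsHermitian) (K : ι → Matrix n n R) :
    (krausMap K A).IsHermitian := by
  simp only [IsHermitian, krausMap_apply, conjTranspose_sum, conjTranspose_mul,
    conjTranspose_conjTranspose, hA.eq, mul_assoc]

theorem trace_krausMap [DecidableEq n] {K : ι → Matrix n n R} (hK : ∑ i, (K i)ᴴ * K i = 1)
    (A : Matrix n n R) : (krausMap K A).trace = A.trace := by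
  rw [krausMap_apply, trace_sum]
  simp_rw [trace_mul_cycle (K _) A]
  rw [← trace_sum, ← Finset.sum_mul, hK, one_mul]

end KrausMap

noncomputable def blochVector (A : Matrix (Fin 2) (Fin 2) ℂ) : Fin 3 → ℝ :=
  fun j => (1 / 2) * ((pauli j * A).trace).re

/-- The matrix `Λ` of the Mueller data of `E`. -/
noncomputable def muellerMatrix (E : Matrix (Fin 2) (Fin 2) ℂ →ₗ[ℂ] Matrix (Fin 2) (Fin 2) ℂ) :
    Matrix (Fin 3) (Fin 3) ℝ :=
  Matrix.of fun j k => blochVector (E (pauli k)) j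

theorem dotσ_eq (v : Fin 3 → ℝ) :
    dotσ v = !![(v 2 : ℂ), v 0 - Complex.I * v 1; v 0 + Complex.I * v 1, -(v 2 : ℂ)] := by
  simp only [dotσ, pauli, σ1, σ2, σ3, Fin.sum_univ_three]
  ext i j
  fin_cases i <;> fin_cases j <;> simp <;> ring

theorem isHermitian_dotσ (v : Fin 3 → ℝ) : (dotσ v).IsHermitian := by
  rw [dotσ_eq]
  ext i j
  fin_cases i <;> fin_cases j <;> simp [Complex.ext_iff]

theorem trace_dotσ (v : Fin 3 → ℝ) : (dotσ v).trace = 0 := by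
  simp [dotσ_eq, trace_fin_two]

theorem det_dotσ (v : Fin 3 → ℝ) : (dotσ v).det = -((v 0 ^ 2 + v 1 ^ 2 + v 2 ^ 2 : ℝ) : ℂ) := by
  rw [dotσ_eq, det_fin_two_of]
  push_cast
  linear_combination (v 1 : ℂ) ^ 2 * Complex.I_sq

theorem dotσ_mul_self (v : Fin 3 → ℝ) :
    dotσ v * dotσ v = ((v 0 ^ 2 + v 1 ^ 2 + v 2 ^ 2 : ℝ) : ℂ) • 1 := by
  rw [dotσ_eq]
  ext i j
  fin_cases i <;> fin_cases j <;> simp [mul_apply, Fin.sum_univ_two] <;> ring_nf <;>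
    simp only [Complex.I_sq] <;> ring

theorem dotσ_neg (v : Fin 3 → ℝ) : dotσ (-v) = -dotσ v := by
  simp [dotσ]

theorem dotσ_blochVector {A : Matrix (Fin 2) (Fin 2) ℂ} (hA : A.IsHermitian) (htr : A.trace = 0) :
    dotσ (blochVector A) = A := by
  have h10 : A 1 0 = star (A 0 1) := by simpa using (congrFun (congrFun hA 1) 0).symm
  have h00 : (A 0 0).im = 0 := by
    have := congrArg Complex.im (congrFun (congrFun hA 0) 0)
    simp only [conjTranspose_apply, Complex.star_def, Complex.conj_im] at this
    linarith
  have h11 : A 1 1 = -A 0 0 := by rw [trace_fin_two] at htr; linear_combination htr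
  rw [dotσ_eq]
  ext i j
  fin_cases i <;> fin_cases j <;>
    simp [blochVector, pauli, σ1, σ2, σ3, trace_fin_two, vecMul, dotProduct, Fin.sum_univ_two,
      h10, h11, h00, Complex.ext_iff] <;> (try constructor) <;> ring

theorem blochVector_map_dotσ (E : Matrix (Fin 2) (Fin 2) ℂ →ₗ[ℂ] Matrix (Fin 2) (Fin 2) ℂ)
    (v : Fin 3 → ℝ) : blochVector (E (dotσ v)) = muellerMatrix E *ᵥ v := by
  ext j
  simp only [blochVector, muellerMatrix, dotσ, map_sum, LinearMap.map_smul_of_tower, Finset.mul_sum,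
    mul_smul_comm, trace_sum, trace_smul, smul_eq_mul, Complex.re_sum, Complex.re_ofReal_mul,
    mulVec, dotProduct, of_apply]
  exact Finset.sum_congr rfl fun _ _ => by ring

noncomputable def blochState (v : Fin 3 → ℝ) : Matrix (Fin 2) (Fin 2) ℂ :=
  (1 / 2 : ℂ) • (1 + dotσ v)

theorem trace_blochState (v : Fin 3 → ℝ) : (blochState v).trace = 1 := by
  simp [blochState, trace_dotσ]

theorem isHermitian_blochState (v : Fin 3 → ℝ) : (blochState v).IsHermitian := by
  simp [IsHermitian, blochState, (isHermitian_dotσ v).eq]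

theorem blochState_sub_blochState_neg (v : Fin 3 → ℝ) :
    blochState v - blochState (-v) = dotσ v := by
  rw [blochState, blochState, dotσ_neg]
  module

open ComplexOrder in
theorem posSemidef_blochState {v : Fin 3 → ℝ} (hv : v 0 ^ 2 + v 1 ^ 2 + v 2 ^ 2 = 1) :
    (blochState v).PosSemidef := by
  have hidem : blochState v * blochState v = blochState v := by
    simp only [blochState, smul_mul_smul_comm, add_mul, mul_add, one_mul, mul_one,
      dotσ_mul_self, hv, Complex.ofReal_one, one_smul]
    module
  have : blochState v = (blochState v)ᴴ * blochState v := by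
    rw [(isHermitian_blochState v).eq, hidem]
  rw [this]
  exact posSemidef_conjTranspose_mul_self _

theorem sum_abs_eigenvalues_of_trace_eq_zero {B : Matrix (Fin 2) (Fin 2) ℂ} (hB : B.IsHermitian)
    (htr : B.trace = 0) : ∑ j, |hB.eigenvalues j| = 2 * √(-B.det.re) := by
  have hsum : hB.eigenvalues 0 + hB.eigenvalues 1 = 0 := by
    have := hB.trace_eq_sum_eigenvalues
    rw [htr, Fin.sum_univ_two, ← RCLike.ofReal_add, eq_comm, RCLike.ofReal_eq_zero] at this
    exact this
  have hprod : hB.eigenvalues 0 * hB.eigenvalues 1 = B.det.re := by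
    rw [hB.det_eq_prod_eigenvalues, Fin.prod_univ_two]
    norm_cast
  rw [Fin.sum_univ_two, ← hprod, show hB.eigenvalues 1 = -hB.eigenvalues 0 by linarith, abs_neg,
    mul_neg, neg_neg, ← sq, Real.sqrt_sq_eq_abs]
  ring

theorem sum_abs_eigenvalues_of_eq_dotσ {B : Matrix (Fin 2) (Fin 2) ℂ} (hB : B.IsHermitian)
    {v : Fin 3 → ℝ} (hBv : B = dotσ v) : ∑ j, |hB.eigenvalues j| = 2 * enorm3 v := by
  rw [sum_abs_eigenvalues_of_trace_eq_zero hB (hBv ▸ trace_dotσ v), hBv, det_dotσ, Complex.neg_re,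
    neg_neg, Complex.ofReal_re, enorm3]

theorem krausMap_dotσ {ι : Type*} [Fintype ι] {K : ι → Matrix (Fin 2) (Fin 2) ℂ}
    (hK : ∑ i, (K i)ᴴ * K i = 1) (v : Fin 3 → ℝ) :
    krausMap K (dotσ v) = dotσ (muellerMatrix (krausMap K) *ᵥ v) := by
  rw [← blochVector_map_dotσ, dotσ_blochVector (isHermitian_krausMap (isHermitian_dotσ v) K)]
  rw [trace_krausMap hK, trace_dotσ]

open ComplexOrder in
theorem stmt7 {N : ℕ} (K : ℝ → Fin N → Matrix (Fin 2) (Fin 2) ℂ)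
    (hTP : ∀ τ, 0 ≤ τ → ∑ i, (K τ i)ᴴ * K τ i = 1)
    (lam : Fin 3 → ℝ → ℝ)
    (hlam : ∀ τ, 0 ≤ τ → ∀ j k : Fin 3,
        (1/2) * ((pauli j * ∑ i, K τ i * pauli k * (K τ i)ᴴ).trace).re
          = if j = k then lam j τ else 0)
    (hMarkov : ∀ ρ ρ' : Matrix (Fin 2) (Fin 2) ℂ,
        ρ.PosSemidef → ρ.trace = 1 → ρ'.PosSemidef → ρ'.trace = 1 →
        ∀ τ₁ τ₂, 0 ≤ τ₁ → τ₁ ≤ τ₂ →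
        ∀ (h₁ : ((∑ i, K τ₁ i * ρ * (K τ₁ i)ᴴ)
              - ∑ i, K τ₁ i * ρ' * (K τ₁ i)ᴴ).IsHermitian)
          (h₂ : ((∑ i, K τ₂ i * ρ * (K τ₂ i)ᴴ)
              - ∑ i, K τ₂ i * ρ' * (K τ₂ i)ᴴ).IsHermitian),
          ∑ j, |h₂.eigenvalues j| ≤ ∑ j, |h₁.eigenvalues j|)
    (mh : Fin 3 → ℝ) (hm : enorm3 mh = 1) :
    ∀ τ₁ τ₂, 0 ≤ τ₁ → τ₁ ≤ τ₂ →
      Real.sqrt (mh 0 ^ 2 * lam 0 τ₂ ^ 2 + mh 1 ^ 2 * lam 1 τ₂ ^ 2 + mh 2 ^ 2 * lam 2 τ₂ ^ 2)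
        ≤ Real.sqrt
            (mh 0 ^ 2 * lam 0 τ₁ ^ 2 + mh 1 ^ 2 * lam 1 τ₁ ^ 2 + mh 2 ^ 2 * lam 2 τ₁ ^ 2) := by
  intro τ₁ τ₂ hτ₁ hle
  have hunit : mh 0 ^ 2 + mh 1 ^ 2 + mh 2 ^ 2 = 1 := by rwa [enorm3, Real.sqrt_eq_one] at hm
  have hmueller : ∀ τ, 0 ≤ τ → muellerMatrix (krausMap (K τ)) = diagonal fun j ↦ lam j τ :=
    fun τ hτ ↦ Matrix.ext fun j k ↦ by rw [diagonal_apply]; exact hlam τ hτ j k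
  have hdiff : ∀ τ, 0 ≤ τ → (∑ i, K τ i * blochState mh * (K τ i)ᴴ)
      - ∑ i, K τ i * blochState (-mh) * (K τ i)ᴴ = dotσ fun j ↦ lam j τ * mh j := by
    intro τ hτ
    rw [← krausMap_apply, ← krausMap_apply, ← map_sub, blochState_sub_blochState_neg,
      krausMap_dotσ (hTP τ hτ), hmueller τ hτ]
    exact congrArg dotσ (funext (mulVec_diagonal _ mh))
  have hsharp : ∀ τ, Real.sqrt (mh 0 ^ 2 * lam 0 τ ^ 2 + mh 1 ^ 2 * lam 1 τ ^ 2
      + mh 2 ^ 2 * lam 2 τ ^ 2) = enorm3 fun j ↦ lam j τ * mh j := by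
    intro τ
    simp only [enorm3, mul_pow, mul_comm]
  have hτ₂ := hτ₁.trans hle
  have hM := hMarkov (blochState mh) (blochState (-mh)) (posSemidef_blochState hunit)
    (trace_blochState mh) (posSemidef_blochState (by simpa using hunit)) (trace_blochState (-mh))
    τ₁ τ₂ hτ₁ hle (hdiff τ₁ hτ₁ ▸ isHermitian_dotσ _) (hdiff τ₂ hτ₂ ▸ isHermitian_dotσ _)
  rw [sum_abs_eigenvalues_of_eq_dotσ _ (hdiff τ₁ hτ₁),
    sum_abs_eigenvalues_of_eq_dotσ _ (hdiff τ₂ hτ₂)] at hM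
  rw [hsharp, hsharp]
  linarith
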